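/- Let n ≥ 1 and let γ : [0,1] → (ℝ³)ⁿ ≅ ℝ^{3n} be a C¹ path with γ(0) = A, γ(1) = B, A ≠ B, such that every scalar coordinate function of γ (all 3n of them) is monotone. Then the 2-energy satisfies E₂ = ∫₀¹ s(t)²·‖γ'(t)‖ dt ≥ (1/3)·‖B − A‖₃³, where s(t) = ∫₀ᵗ ‖γ'(u)‖ du and ‖B − A‖₃³ = Σₖ |Bₖ − Aₖ|³ over all 3n coordinates. -/

import Mathlib

/-! The energy is an exact integral: `s² ds = d(s³/3)`, so `E₂ = L³/3` where `L = s 1` is the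
length of `γ`. The length dominates the chord, `‖B − A‖₂ ≤ L`, and the `ℓ³` norm of `B − A` is at
most its `ℓ²` norm because every coordinate is bounded by the `ℓ²` norm. -/

open Set intervalIntegral MeasureTheory

section

variable {E : Type*} [NormedAddCommGroup E] [NormedSpace ℝ E] [CompleteSpace E]

theorem hasDerivAt_integral_of_continuousOn_Icc {f : ℝ → E} {a b x : ℝ}
    (hf : ContinuousOn f (Icc a b)) (hx : x ∈ Ioo a b) :
    HasDerivAt (fun t => ∫ u in a..t, f u) (f x) x := by
  have hIcc : Icc a b ∈ nhds x := Icc_mem_nhds hx.1 hx.2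
  refine integral_hasDerivAt_right ?_ ?_ (hf.continuousAt hIcc)
  · exact (hf.mono (Icc_subset_Icc le_rfl hx.2.le)).intervalIntegrable_of_Icc hx.1.le
  · exact (hf.mono Ioo_subset_Icc_self).stronglyMeasurableAtFilter isOpen_Ioo x hx

theorem norm_sub_le_integral_norm_derivWithin {γ : ℝ → E} {a b : ℝ} (hab : a ≤ b)
    (hγ : ContDiffOn ℝ 1 γ (Icc a b)) :
    ‖γ b - γ a‖ ≤ ∫ t in a..b, ‖derivWithin γ (Icc a b) t‖ := by
  rw [← integral_derivWithin_Icc_of_contDiffOn_Icc hγ hab]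
  exact norm_integral_le_integral_norm hab

end

theorem integral_primitive_pow_mul {f : ℝ → ℝ} {a b : ℝ} (hab : a ≤ b)
    (hf : ContinuousOn f (Icc a b)) (k : ℕ) :
    ∫ t in a..b, (∫ u in a..t, f u) ^ k * f t = (∫ u in a..b, f u) ^ (k + 1) / (k + 1) := by
  have hf' : ContinuousOn f (uIcc a b) := by rwa [uIcc_of_le hab]
  have hF : ContinuousOn (fun t => ∫ u in a..t, f u) (uIcc a b) :=
    continuousOn_primitive_interval hf'.integrableOn_uIcc
  have := integral_comp_mul_deriv'' (a := a) (b := b) (g := fun u => u ^ k) (f' := f) hF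
    (fun x hx => (hasDerivAt_integral_of_continuousOn_Icc hf
      (by simpa [hab] using hx)).hasDerivWithinAt)
    hf' (continuous_pow k).continuousOn
  simpa [integral_pow] using this

theorem sum_sum_abs_pow_three_le_norm_pow_three {ι : Type*} [Fintype ι] {κ : ι → Type*}
    [∀ i, Fintype (κ i)] (x : PiLp 2 fun i => EuclideanSpace ℝ (κ i)) :
    ∑ i, ∑ k, |x i k| ^ 3 ≤ ‖x‖ ^ 3 := by
  have hcoord : ∀ i k, |x i k| ≤ ‖x‖ := fun i k => by
    simpa using (PiLp.norm_apply_le (x i) k).trans (PiLp.norm_apply_le x i)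
  have hsq : ∑ i, ∑ k, |x i k| ^ 2 = ‖x‖ ^ 2 := by
    simp [PiLp.norm_sq_eq_of_L2]
  calc ∑ i, ∑ k, |x i k| ^ 3 ≤ ∑ i, ∑ k, ‖x‖ * |x i k| ^ 2 := by
        gcongr with i _ k _
        rw [pow_succ' _ 2]
        gcongr
        exact hcoord i k
    _ = ‖x‖ ^ 3 := by simp only [← Finset.mul_sum, hsq]; ring

theorem stmt_10_general (n : ℕ)
    (γ : ℝ → PiLp 2 (fun _ : Fin n => EuclideanSpace ℝ (Fin 3)))
    (A B : PiLp 2 (fun _ : Fin n => EuclideanSpace ℝ (Fin 3)))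
    (hγ : ContDiffOn ℝ 1 γ (Set.Icc 0 1))
    (h0 : γ 0 = A) (h1 : γ 1 = B)
    (s : ℝ → ℝ)
    (hs : ∀ t, s t = ∫ u in (0:ℝ)..t, ‖derivWithin γ (Set.Icc 0 1) u‖) :
    (1 / 3) * ∑ j : Fin n, ∑ k : Fin 3, |B j k - A j k| ^ 3 ≤
      ∫ t in (0:ℝ)..1, s t ^ 2 * ‖derivWithin γ (Set.Icc 0 1) t‖ := by
  have hspeed : ContinuousOn (fun u => ‖derivWithin γ (Icc 0 1) u‖) (Icc 0 1) :=
    (hγ.continuousOn_derivWithin (uniqueDiffOn_Icc one_pos) le_rfl).norm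
  have henergy : ∫ t in (0:ℝ)..1, s t ^ 2 * ‖derivWithin γ (Icc 0 1) t‖ = s 1 ^ 3 / 3 := by
    simp_rw [hs]
    rw [integral_primitive_pow_mul zero_le_one hspeed 2]
    norm_num
  have hchord : ‖B - A‖ ≤ s 1 := by
    rw [hs 1, ← h0, ← h1]
    exact norm_sub_le_integral_norm_derivWithin zero_le_one hγ
  calc (1 / 3) * ∑ j : Fin n, ∑ k : Fin 3, |B j k - A j k| ^ 3 ≤ (1 / 3) * ‖B - A‖ ^ 3 := by
        gcongr
        exact sum_sum_abs_pow_three_le_norm_pow_three (B - A)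
    _ ≤ s 1 ^ 3 / 3 := by rw [one_div_mul_eq_div]; gcongr
    _ = _ := henergy.symm

/-- Theorem 3(iii): for a C¹ path `γ : [0,1] → (ℝ³)ⁿ` (Euclidean product norm, realized as
the `L²`-product `PiLp 2` of `n` copies of `ℝ³`) from `A` to `B` with `A ≠ B`, all of whose
`3n` scalar coordinate functions are monotone, the 2-energy satisfies
`E₂ = ∫₀¹ s(t)²·‖γ'(t)‖ dt ≥ (1/3)·‖B − A‖₃³ = (1/3)·Σₖ |Bₖ − Aₖ|³`. -/
theorem stmt_10 (n : ℕ) (hn : 1 ≤ n)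
    (γ : ℝ → PiLp 2 (fun _ : Fin n => EuclideanSpace ℝ (Fin 3)))
    (A B : PiLp 2 (fun _ : Fin n => EuclideanSpace ℝ (Fin 3)))
    (hγ : ContDiffOn ℝ 1 γ (Set.Icc 0 1))
    (h0 : γ 0 = A) (h1 : γ 1 = B) (hAB : A ≠ B)
    (hmono : ∀ (j : Fin n) (k : Fin 3),
      MonotoneOn (fun t => γ t j k) (Set.Icc 0 1) ∨
        AntitoneOn (fun t => γ t j k) (Set.Icc 0 1))
    (s : ℝ → ℝ)
    (hs : ∀ t, s t = ∫ u in (0:ℝ)..t, ‖derivWithin γ (Set.Icc 0 1) u‖) :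
    (1 / 3) * ∑ j : Fin n, ∑ k : Fin 3, |B j k - A j k| ^ 3 ≤
      ∫ t in (0:ℝ)..1, s t ^ 2 * ‖derivWithin γ (Set.Icc 0 1) t‖ :=
  stmt_10_general n γ A B hγ h0 h1 s hs
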